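/- Let A be a real M×N matrix such that AA* is invertible. Suppose y = Ax + e where x ∈ ℝ^N is s-sparse and e ∈ ℝ^M, and let λ > 0. Define the NST+HT+subOptFB iterates by: μ^0 = 0 and, for k ≥ 1: x^k = μ^{k−1} + A*(AA*)⁻¹(y − Aμ^{k−1}); T_k an index set of s largest absolute entries of x^k; and μ^k the vector supported on T_k given by μ^k = (x^k)_{T_k} + λ⁻¹·[A*(y − A(x^k)_{T_k})]_{T_k}. Suppose δ_{3s}(A) < 1, γ_{3s}(A) < √2/4, and λ > 2√2·γ_{3s}(A)·(1+δ_{3s}(A))·√(1+δ_{3s}(A)) / (√(1−δ_{3s}(A))·(1−2√2·γ_{3s}(A))). Set ρ = 2√2·γ_{3s}(A)·(1 + (1+δ_{3s}(A))√(1+δ_{3s}(A))/(λ√(1−δ_{3s}(A)))) and κ = (1 + (1+δ_{3s}(A))√(1+δ_{3s}(A))/(λ√(1−δ_{3s}(A))))·(√(2+2θ_{3s}(A)) + √(1+θ_{3s}(A))) + (1+δ_{3s}(A))/(λ√(1−δ_{3s}(A))). Then for every k ≥ 1: ‖x − μ^k‖₂ ≤ ρ^k·‖x − μ^0‖₂ +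 κ·(1−ρ^k)/(1−ρ)·‖e‖₂. -/

import Mathlib

open Matrix

/-- The Euclidean (ℓ²) norm of a vector in ℝⁿ. -/
noncomputable def norm2 {n : ℕ} (x : Fin n → ℝ) : ℝ := Real.sqrt (∑ i, x i ^ 2)

/-- `x` is `s`-sparse: it has at most `s` nonzero entries. -/
def sparse {n : ℕ} (s : ℕ) (x : Fin n → ℝ) : Prop :=
  (Finset.univ.filter fun i => x i ≠ 0).card ≤ s

/-- `restrict T x` is the vector agreeing with `x` on `T` and zero outside `T`. -/
def restrict {n : ℕ} (T : Finset (Fin n)) (x : Fin n → ℝ) : Fin n → ℝ :=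
  fun i => if i ∈ T then x i else 0

/-- The positive semidefinite square root of a positive semidefinite matrix, as
`Matrix.PosSemidef.sqrt` was defined in the older Mathlib (removed since). -/
noncomputable def posSemidefSqrt {n : ℕ} {B : Matrix (Fin n) (Fin n) ℝ} (hB : B.PosSemidef) :
    Matrix (Fin n) (Fin n) ℝ :=
  (hB.1.eigenvectorUnitary : Matrix (Fin n) (Fin n) ℝ) *
    diagonal ((↑) ∘ (√·) ∘ hB.1.eigenvalues) *
    (star hB.1.eigenvectorUnitary : Matrix (Fin n) (Fin n) ℝ)

/-- The preconditioned matrix `(AAᴴ)^{-1/2} A`, where `(AAᴴ)^{-1/2}` is the inverse of the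
positive semidefinite square root of `AAᴴ`. -/
noncomputable def precond {M N : ℕ} (A : Matrix (Fin M) (Fin N) ℝ) :
    Matrix (Fin M) (Fin N) ℝ :=
  (posSemidefSqrt (Matrix.posSemidef_self_mul_conjTranspose A))⁻¹ * A

/-- The preconditioned restricted isometry constant `γ_s(A)`: the smallest `γ ≥ 0` such that
`(1-γ)‖x‖₂² ≤ ‖(AAᴴ)^{-1/2}Ax‖₂²` for all `s`-sparse `x`. -/
noncomputable def pripConst {M N : ℕ} (A : Matrix (Fin M) (Fin N) ℝ) (s : ℕ) : ℝ :=
  sInf {γ : ℝ | 0 ≤ γ ∧ ∀ x : Fin N → ℝ, sparse s x →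
    (1 - γ) * norm2 x ^ 2 ≤ norm2 ((precond A).mulVec x) ^ 2}

/-- The restricted isometry constant `δ_s(B)`: the smallest `δ ≥ 0` such that
`(1-δ)‖x‖₂² ≤ ‖Bx‖₂² ≤ (1+δ)‖x‖₂²` for all `s`-sparse `x`. -/
noncomputable def ripConst {m n : ℕ} (B : Matrix (Fin m) (Fin n) ℝ) (s : ℕ) : ℝ :=
  sInf {δ : ℝ | 0 ≤ δ ∧ ∀ x : Fin n → ℝ, sparse s x →
    (1 - δ) * norm2 x ^ 2 ≤ norm2 (B.mulVec x) ^ 2 ∧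
      norm2 (B.mulVec x) ^ 2 ≤ (1 + δ) * norm2 x ^ 2}

/-- `θ_t(A) = δ_t((AAᴴ)⁻¹A)`. -/
noncomputable def thetaConst {M N : ℕ} (A : Matrix (Fin M) (Fin N) ℝ) (t : ℕ) : ℝ :=
  ripConst ((A * Aᴴ)⁻¹ * A) t

/-!
Write `u = x - μ^{k-1}` and let `P = A*(AA*)⁻¹A` be the orthogonal projection onto the row space
of `A`. The first half-step gives `x - x^k = (I - P)u - A*(AA*)⁻¹e`. For sparse `z` one has
`‖(I - P)z‖² = ‖z‖² - ‖(AA*)^{-1/2}Az‖² ≤ γ‖z‖²`, hence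
`⟪z, (I - P)u⟫ = ⟪(I - P)z, (I - P)u⟫ ≤ γ‖z‖‖u‖`, and by duality `x - x^k` is at most
`γ‖u‖ + √(1+θ)‖e‖` on `Ω = supp x ∪ T_k`, a set of size at most `2s`. Keeping the `s` largest
entries of `x^k` costs at most a factor `2` on that set, and the feedback correction adds at most
`λ⁻¹(1+δ)` times the error plus `λ⁻¹√(1+δ)‖e‖`. Hence `‖x - μ^k‖ ≤ ρ‖x - μ^{k-1}‖ + κ‖e‖`, the
choice of `λ` makes `ρ < 1`, and the recursion unrolls to the claimed bound.
-/

section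

variable {m n : ℕ}

lemma norm2_nonneg (x : Fin n → ℝ) : 0 ≤ norm2 x := Real.sqrt_nonneg _

lemma norm2_eq_norm (x : Fin n → ℝ) : norm2 x = ‖WithLp.toLp 2 x‖ := by
  simp [norm2, EuclideanSpace.norm_eq]

lemma norm2_sq (x : Fin n → ℝ) : norm2 x ^ 2 = x ⬝ᵥ x := by
  rw [norm2, Real.sq_sqrt (by positivity)]
  simp [dotProduct, sq]

lemma dotProduct_le_norm2_mul_norm2 (x y : Fin n → ℝ) : x ⬝ᵥ y ≤ norm2 x * norm2 y :=
  Real.sum_mul_le_sqrt_mul_sqrt _ x y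

lemma norm2_add_le (x y : Fin n → ℝ) : norm2 (x + y) ≤ norm2 x + norm2 y := by
  simpa only [norm2_eq_norm, WithLp.toLp_add] using norm_add_le _ _

lemma norm2_sub_le (x y : Fin n → ℝ) : norm2 (x - y) ≤ norm2 x + norm2 y := by
  simpa only [norm2_eq_norm, WithLp.toLp_sub] using norm_sub_le _ _

lemma norm2_neg (x : Fin n → ℝ) : norm2 (-x) = norm2 x := by
  simp only [norm2_eq_norm, WithLp.toLp_neg, norm_neg]

lemma norm2_smul (c : ℝ) (x : Fin n → ℝ) : norm2 (c • x) = |c| * norm2 x := by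
  simp only [norm2_eq_norm, WithLp.toLp_smul, norm_smul, Real.norm_eq_abs]

lemma exists_norm2_mulVec_le (B : Matrix (Fin m) (Fin n) ℝ) :
    ∃ C, ∀ x, norm2 (B *ᵥ x) ≤ C * norm2 x := by
  open scoped Matrix.Norms.L2Operator in
  exact ⟨‖B‖, fun x => by simpa [norm2_eq_norm] using l2_opNorm_mulVec B (WithLp.toLp 2 x)⟩

lemma le_sqrt_mul_of_sq_le {a b c : ℝ} (ha : 0 ≤ a) (hb : 0 ≤ b) (hc : 0 ≤ c)
    (h : a ^ 2 ≤ b * c ^ 2) : a ≤ √b * c :=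
  (pow_le_pow_iff_left₀ ha (by positivity) two_ne_zero).1 (by rwa [mul_pow, Real.sq_sqrt hb])

lemma sparse.mono {s t : ℕ} {x : Fin n → ℝ} (hx : sparse s x) (h : s ≤ t) : sparse t x :=
  hx.trans h

lemma sparse_of_support_subset {T : Finset (Fin n)} {x : Fin n → ℝ} (h : ∀ i ∉ T, x i = 0) :
    sparse T.card x :=
  Finset.card_le_card fun i hi => by
    by_contra hiT
    exact (Finset.mem_filter.1 hi).2 (h i hiT)

lemma sparse_restrict (T : Finset (Fin n)) (x : Fin n → ℝ) : sparse T.card (restrict T x) :=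
  sparse_of_support_subset fun _ hi => if_neg hi

lemma sparse.sub {a b : ℕ} {x y : Fin n → ℝ} (hx : sparse a x) (hy : sparse b y) :
    sparse (a + b) (x - y) :=
  (sparse_of_support_subset fun i hi => by simp_all).mono
    ((Finset.card_union_le _ _).trans (add_le_add hx hy))

lemma restrict_add (T : Finset (Fin n)) (a b : Fin n → ℝ) :
    restrict T (a + b) = restrict T a + restrict T b := by
  funext i; simp only [restrict, Pi.add_apply]; split_ifs <;> simp

lemma restrict_sub (T : Finset (Fin n)) (a b : Fin n → ℝ) :
    restrict T (a - b) = restrict T a - restrict T b := by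
  funext i; simp only [restrict, Pi.sub_apply]; split_ifs <;> simp

lemma norm2_restrict_sq (T : Finset (Fin n)) (x : Fin n → ℝ) :
    norm2 (restrict T x) ^ 2 = ∑ i ∈ T, x i ^ 2 := by
  rw [norm2, Real.sq_sqrt (by positivity)]
  simp [restrict]

lemma norm2_restrict_mono {T U : Finset (Fin n)} (h : T ⊆ U) (x : Fin n → ℝ) :
    norm2 (restrict T x) ≤ norm2 (restrict U x) := by
  refine (pow_le_pow_iff_left₀ (norm2_nonneg _) (norm2_nonneg _) two_ne_zero).1 ?_
  rw [norm2_restrict_sq, norm2_restrict_sq]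
  exact Finset.sum_le_sum_of_subset_of_nonneg h fun i _ _ => sq_nonneg _

lemma restrict_dotProduct_restrict (T : Finset (Fin n)) (x : Fin n → ℝ) :
    restrict T x ⬝ᵥ restrict T x = restrict T x ⬝ᵥ x := by
  simp only [dotProduct, restrict]
  exact Finset.sum_congr rfl fun i _ => by split_ifs <;> simp

lemma norm2_restrict_le_of_dotProduct_le {t : ℕ} {w : Fin n → ℝ} {C : ℝ} (hC : 0 ≤ C)
    (h : ∀ z, sparse t z → z ⬝ᵥ w ≤ C * norm2 z) {Ω : Finset (Fin n)} (hΩ : Ω.card ≤ t) :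
    norm2 (restrict Ω w) ≤ C := by
  have key : norm2 (restrict Ω w) ^ 2 ≤ C * norm2 (restrict Ω w) := by
    rw [norm2_sq, restrict_dotProduct_restrict]
    exact h _ ((sparse_restrict Ω w).mono hΩ)
  nlinarith [norm2_nonneg (restrict Ω w)]

lemma ripConst_nonneg (B : Matrix (Fin m) (Fin n) ℝ) (t : ℕ) : 0 ≤ ripConst B t := by
  unfold ripConst
  exact Real.sInf_nonneg fun _ hδ => hδ.1

lemma ripConst_spec (B : Matrix (Fin m) (Fin n) ℝ) {t : ℕ} {x : Fin n → ℝ} (hx : sparse t x) :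
    (1 - ripConst B t) * norm2 x ^ 2 ≤ norm2 (B *ᵥ x) ^ 2 ∧
      norm2 (B *ᵥ x) ^ 2 ≤ (1 + ripConst B t) * norm2 x ^ 2 := by
  have hmem : ripConst B t ∈ _ := IsClosed.csInf_mem ?_ ?_ ?_
  · exact hmem.2 x hx
  · simp only [Set.ofPred_and, Set.ofPred_forall]
    exact (isClosed_le continuous_const continuous_id).inter <|
      isClosed_iInter fun _ => isClosed_iInter fun _ =>
        (isClosed_le (by fun_prop) continuous_const).inter
          (isClosed_le continuous_const (by fun_prop))
  · obtain ⟨C, hC⟩ := exists_norm2_mulVec_le B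
    refine ⟨1 + C ^ 2, by positivity, fun z _ => ⟨?_, ?_⟩⟩
    · nlinarith [sq_nonneg (norm2 z), sq_nonneg (norm2 (B *ᵥ z)), sq_nonneg C]
    · have h := hC z
      have h0 := norm2_nonneg (B *ᵥ z)
      nlinarith [sq_nonneg (norm2 z), mul_le_mul h h h0 (h0.trans h)]
  · exact ⟨0, fun _ hδ => hδ.1⟩

lemma norm2_mulVec_le_of_sparse (B : Matrix (Fin m) (Fin n) ℝ) {t : ℕ} {z : Fin n → ℝ}
    (hz : sparse t z) : norm2 (B *ᵥ z) ≤ √(1 + ripConst B t) * norm2 z :=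
  le_sqrt_mul_of_sq_le (norm2_nonneg _) (by linarith [ripConst_nonneg B t]) (norm2_nonneg _)
    (ripConst_spec B hz).2

lemma norm2_restrict_transpose_mulVec_le (B : Matrix (Fin m) (Fin n) ℝ) {t : ℕ}
    {Ω : Finset (Fin n)} (hΩ : Ω.card ≤ t) (e : Fin m → ℝ) :
    norm2 (restrict Ω (Bᵀ *ᵥ e)) ≤ √(1 + ripConst B t) * norm2 e := by
  refine norm2_restrict_le_of_dotProduct_le (mul_nonneg (Real.sqrt_nonneg _) (norm2_nonneg e))
    (fun z hz => ?_) hΩ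
  calc z ⬝ᵥ Bᵀ *ᵥ e = (B *ᵥ z) ⬝ᵥ e := by
        rw [dotProduct_mulVec, vecMul_transpose, dotProduct_comm]
    _ ≤ norm2 (B *ᵥ z) * norm2 e := dotProduct_le_norm2_mul_norm2 _ _
    _ ≤ √(1 + ripConst B t) * norm2 z * norm2 e := by
        gcongr; exacts [norm2_nonneg e, norm2_mulVec_le_of_sparse B hz]
    _ = √(1 + ripConst B t) * norm2 e * norm2 z := by ring

lemma pripConst_nonneg {M N : ℕ} (A : Matrix (Fin M) (Fin N) ℝ) (t : ℕ) : 0 ≤ pripConst A t := by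
  unfold pripConst
  exact Real.sInf_nonneg fun _ hγ => hγ.1

lemma pripConst_spec {M N : ℕ} (A : Matrix (Fin M) (Fin N) ℝ) {t : ℕ} {x : Fin N → ℝ}
    (hx : sparse t x) : (1 - pripConst A t) * norm2 x ^ 2 ≤ norm2 (precond A *ᵥ x) ^ 2 := by
  have hmem : pripConst A t ∈ _ := IsClosed.csInf_mem ?_ ?_ ?_
  · exact hmem.2 x hx
  · simp only [Set.ofPred_and, Set.ofPred_forall]
    exact (isClosed_le continuous_const continuous_id).inter <|
      isClosed_iInter fun _ => isClosed_iInter fun _ => isClosed_le (by fun_prop) continuous_const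
  · exact ⟨1, zero_le_one, fun z _ => by nlinarith [sq_nonneg (norm2 (precond A *ᵥ z))]⟩
  · exact ⟨0, fun _ hγ => hγ.1⟩

lemma posSemidefSqrt_isSymm {B : Matrix (Fin n) (Fin n) ℝ} (hB : B.PosSemidef) :
    (posSemidefSqrt hB).IsSymm := by
  rw [IsSymm, ← conjTranspose_eq_transpose_of_trivial, posSemidefSqrt, conjTranspose_mul,
    conjTranspose_mul, diagonal_conjTranspose, star_eq_conjTranspose, conjTranspose_conjTranspose,
    star_trivial, Matrix.mul_assoc]

lemma posSemidefSqrt_mul_self {B : Matrix (Fin n) (Fin n) ℝ} (hB : B.PosSemidef) :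
    posSemidefSqrt hB * posSemidefSqrt hB = B := by
  conv_rhs => rw [hB.1.spectral_theorem, Unitary.conjStarAlgAut_apply]
  have hU := Unitary.coe_star_mul_self hB.1.eigenvectorUnitary
  rw [posSemidefSqrt, Matrix.mul_assoc, Matrix.mul_assoc,
    ← Matrix.mul_assoc (star _ : Matrix _ _ ℝ),
    ← Matrix.mul_assoc _ _ (diagonal _), hU, Matrix.one_mul, ← Matrix.mul_assoc (diagonal _),
    diagonal_mul_diagonal, ← Matrix.mul_assoc]
  congr 3
  funext i
  exact Real.mul_self_sqrt (hB.eigenvalues_nonneg i)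

lemma dotProduct_mulVec_eq_of_isStarProjection {E : Matrix (Fin n) (Fin n) ℝ}
    (hE : IsStarProjection E) (z w : Fin n → ℝ) : z ⬝ᵥ (E *ᵥ w) = (E *ᵥ z) ⬝ᵥ (E *ᵥ w) := by
  have hT : Eᵀ = E := by rw [← conjTranspose_eq_transpose_of_trivial]; exact hE.isSelfAdjoint
  have hv : z ᵥ* E = E *ᵥ z := by simpa [hT] using vecMul_transpose E z
  conv_lhs => rw [← hE.isIdempotentElem.eq, ← mulVec_mulVec, dotProduct_mulVec, hv]

section RowSpaceProjection

variable {M N : ℕ} (A : Matrix (Fin M) (Fin N) ℝ)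

noncomputable def rowSpaceProj : Matrix (Fin N) (Fin N) ℝ := Aᴴ * (A * Aᴴ)⁻¹ * A

lemma gram_inv_isSymm : ((A * Aᴴ)⁻¹).IsSymm := by
  rw [IsSymm, transpose_nonsing_inv, ← conjTranspose_eq_transpose_of_trivial,
    conjTranspose_mul, conjTranspose_conjTranspose]

lemma isStarProjection_rowSpaceProj (hA : IsUnit (A * Aᴴ).det) :
    IsStarProjection (rowSpaceProj A) where
  isIdempotentElem := by
    rw [IsIdempotentElem, rowSpaceProj, Matrix.mul_assoc _ A, ← Matrix.mul_assoc A,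
      ← Matrix.mul_assoc A, mul_nonsing_inv _ hA, Matrix.one_mul]
  isSelfAdjoint := by
    rw [IsSelfAdjoint, rowSpaceProj, star_eq_conjTranspose, conjTranspose_mul, conjTranspose_mul,
      conjTranspose_conjTranspose, conjTranspose_eq_transpose_of_trivial ((A * Aᴴ)⁻¹),
      (gram_inv_isSymm A).eq, Matrix.mul_assoc]

lemma dotProduct_rowSpaceProj_mulVec (z : Fin N → ℝ) :
    z ⬝ᵥ (rowSpaceProj A *ᵥ z) = norm2 (precond A *ᵥ z) ^ 2 := by
  set R := posSemidefSqrt (posSemidef_self_mul_conjTranspose A)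
  have hR : (A * Aᴴ)⁻¹ = R⁻¹ᵀ * R⁻¹ := by
    rw [transpose_nonsing_inv, (posSemidefSqrt_isSymm _).eq, ← Matrix.mul_inv_rev,
      posSemidefSqrt_mul_self]
  have hP : rowSpaceProj A = (R⁻¹ * A)ᵀ * (R⁻¹ * A) := by
    rw [rowSpaceProj, hR, transpose_mul, conjTranspose_eq_transpose_of_trivial]
    simp only [Matrix.mul_assoc]
  rw [norm2_sq, show precond A = R⁻¹ * A from rfl, hP, ← mulVec_mulVec, dotProduct_mulVec,
    vecMul_transpose]

lemma norm2_residual_le (hA : IsUnit (A * Aᴴ).det) {t : ℕ} {z : Fin N → ℝ} (hz : sparse t z) :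
    norm2 ((1 - rowSpaceProj A) *ᵥ z) ≤ √(pripConst A t) * norm2 z := by
  refine le_sqrt_mul_of_sq_le (norm2_nonneg _) (pripConst_nonneg A t) (norm2_nonneg _) ?_
  rw [norm2_sq, ← dotProduct_mulVec_eq_of_isStarProjection
    (isStarProjection_rowSpaceProj A hA).one_sub, sub_mulVec, one_mulVec, dotProduct_sub,
    dotProduct_rowSpaceProj_mulVec, ← norm2_sq]
  linarith [pripConst_spec A hz]

lemma norm2_restrict_residual_le (hA : IsUnit (A * Aᴴ).det) {t : ℕ} {u : Fin N → ℝ}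
    (hu : sparse t u) {Ω : Finset (Fin N)} (hΩ : Ω.card ≤ t) :
    norm2 (restrict Ω ((1 - rowSpaceProj A) *ᵥ u)) ≤ pripConst A t * norm2 u := by
  have hγ := pripConst_nonneg A t
  set E := 1 - rowSpaceProj A
  have hE : IsStarProjection E := (isStarProjection_rowSpaceProj A hA).one_sub
  refine norm2_restrict_le_of_dotProduct_le (mul_nonneg hγ (norm2_nonneg u))
    (fun z hz => ?_) hΩ
  calc z ⬝ᵥ E *ᵥ u = (E *ᵥ z) ⬝ᵥ (E *ᵥ u) := dotProduct_mulVec_eq_of_isStarProjection hE _ _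
    _ ≤ norm2 (E *ᵥ z) * norm2 (E *ᵥ u) := dotProduct_le_norm2_mul_norm2 _ _
    _ ≤ (√(pripConst A t) * norm2 z) * (√(pripConst A t) * norm2 u) := by
          gcongr
          exacts [norm2_nonneg _, mul_nonneg (Real.sqrt_nonneg _) (norm2_nonneg _),
            norm2_residual_le A hA hz, norm2_residual_le A hA hu]
    _ = pripConst A t * norm2 u * norm2 z := by
          rw [mul_mul_mul_comm, Real.mul_self_sqrt hγ]; ring

end RowSpaceProjection

lemma norm2_restrict_sdiff_le_of_largest {S T : Finset (Fin n)} (z : Fin n → ℝ)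
    (hcard : S.card ≤ T.card) (hT : ∀ i ∈ T, ∀ j ∉ T, |z j| ≤ |z i|) :
    norm2 (restrict (S \ T) z) ≤ norm2 (restrict (T \ S) z) := by
  refine (pow_le_pow_iff_left₀ (norm2_nonneg _) (norm2_nonneg _) two_ne_zero).1 ?_
  rw [norm2_restrict_sq, norm2_restrict_sq]
  have hsdiff : (S \ T).card ≤ (T \ S).card := Finset.card_sdiff_le_card_sdiff_iff.2 hcard
  rcases (S \ T).eq_empty_or_nonempty with hST | hST
  · rw [hST, Finset.sum_empty]
    positivity
  obtain ⟨i₀, hi₀, hmin⟩ := Finset.exists_min_image (T \ S) (fun i => |z i|)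
    (Finset.card_pos.1 ((Finset.card_pos.2 hST).trans_le hsdiff))
  calc ∑ j ∈ S \ T, z j ^ 2 ≤ (S \ T).card • z i₀ ^ 2 :=
        Finset.sum_le_card_nsmul _ _ _ fun j hj =>
          sq_le_sq.2 (hT i₀ (Finset.mem_sdiff.1 hi₀).1 j (Finset.mem_sdiff.1 hj).2)
    _ ≤ (T \ S).card • z i₀ ^ 2 := nsmul_le_nsmul_left (sq_nonneg _) hsdiff
    _ ≤ ∑ i ∈ T \ S, z i ^ 2 :=
        Finset.card_nsmul_le_sum _ _ _ fun i hi => sq_le_sq.2 (hmin i hi)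

lemma norm2_sub_restrict_le_of_largest {S T : Finset (Fin n)} {x : Fin n → ℝ} (z : Fin n → ℝ)
    (hxS : ∀ i ∉ S, x i = 0) (hcard : S.card ≤ T.card) (hT : ∀ i ∈ T, ∀ j ∉ T, |z j| ≤ |z i|) :
    norm2 (x - restrict T z) ≤ 2 * norm2 (restrict (S ∪ T) (x - z)) := by
  have hdecomp : x - restrict T z = restrict (S ∪ T) (x - z) + restrict (S \ T) z := by
    funext i
    by_cases hiT : i ∈ T <;> by_cases hiS : i ∈ S <;> simp [restrict, hiT, hiS, hxS]
  have hswap : restrict (T \ S) z = -restrict (T \ S) (x - z) := by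
    funext i
    by_cases hiT : i ∈ T <;> by_cases hiS : i ∈ S <;> simp [restrict, hiT, hiS, hxS]
  calc norm2 (x - restrict T z)
        ≤ norm2 (restrict (S ∪ T) (x - z)) + norm2 (restrict (S \ T) z) :=
          hdecomp ▸ norm2_add_le _ _
    _ ≤ norm2 (restrict (S ∪ T) (x - z)) + norm2 (restrict (T \ S) (x - z)) := by
          have h := norm2_restrict_sdiff_le_of_largest z hcard hT
          rw [hswap, norm2_neg] at h
          linarith
    _ ≤ 2 * norm2 (restrict (S ∪ T) (x - z)) := by
          have h : T \ S ⊆ S ∪ T := Finset.sdiff_subset.trans Finset.subset_union_right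
          linarith [norm2_restrict_mono h (x - z)]

section IterationSteps

variable {M N : ℕ} (A : Matrix (Fin M) (Fin N) ℝ)

lemma norm2_restrict_sub_preconditioned_step_le (hA : IsUnit (A * Aᴴ).det) {t : ℕ}
    {x μ : Fin N → ℝ} (e : Fin M → ℝ) (hu : sparse t (x - μ)) {Ω : Finset (Fin N)}
    (hΩ : Ω.card ≤ t) :
    norm2 (restrict Ω (x - (μ + (Aᴴ * (A * Aᴴ)⁻¹) *ᵥ (A *ᵥ x + e - A *ᵥ μ)))) ≤
      pripConst A t * norm2 (x - μ) + √(1 + thetaConst A t) * norm2 e := by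
  have hsplit : x - (μ + (Aᴴ * (A * Aᴴ)⁻¹) *ᵥ (A *ᵥ x + e - A *ᵥ μ)) =
      (1 - rowSpaceProj A) *ᵥ (x - μ) - ((A * Aᴴ)⁻¹ * A)ᵀ *ᵥ e := by
    rw [transpose_mul, (gram_inv_isSymm A).eq, ← conjTranspose_eq_transpose_of_trivial A]
    simp only [rowSpaceProj, sub_mulVec, one_mulVec, mulVec_add, mulVec_sub, ← mulVec_mulVec]
    abel
  rw [hsplit, restrict_sub]
  exact (norm2_sub_le _ _).trans (add_le_add (norm2_restrict_residual_le A hA hu hΩ)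
    (norm2_restrict_transpose_mulVec_le _ hΩ e))

lemma norm2_sub_feedback_step_le {t : ℕ} {lam : ℝ} (hlam : 0 ≤ lam) {x z : Fin N → ℝ}
    (e : Fin M → ℝ) (hw : sparse t (x - z)) {T : Finset (Fin N)} (hT : T.card ≤ t) :
    norm2 (x - (z + lam⁻¹ • restrict T (Aᴴ *ᵥ (A *ᵥ x + e - A *ᵥ z)))) ≤
      (1 + lam⁻¹ * (1 + ripConst A t)) * norm2 (x - z) +
        lam⁻¹ * √(1 + ripConst A t) * norm2 e := by
  set δ := ripConst A t
  rw [conjTranspose_eq_transpose_of_trivial]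
  have hAA : norm2 (restrict T (Aᵀ *ᵥ (A *ᵥ (x - z)))) ≤ (1 + δ) * norm2 (x - z) :=
    calc _ ≤ √(1 + δ) * norm2 (A *ᵥ (x - z)) := norm2_restrict_transpose_mulVec_le A hT _
      _ ≤ √(1 + δ) * (√(1 + δ) * norm2 (x - z)) := by
          gcongr; exact norm2_mulVec_le_of_sparse A hw
      _ = (1 + δ) * norm2 (x - z) := by
          rw [← mul_assoc, Real.mul_self_sqrt (by linarith [ripConst_nonneg A t])]
  have hAe : norm2 (restrict T (Aᵀ *ᵥ e)) ≤ √(1 + δ) * norm2 e :=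
    norm2_restrict_transpose_mulVec_le A hT e
  have hsplit : x - (z + lam⁻¹ • restrict T (Aᵀ *ᵥ (A *ᵥ x + e - A *ᵥ z))) =
      (x - z) - lam⁻¹ • (restrict T (Aᵀ *ᵥ (A *ᵥ (x - z))) + restrict T (Aᵀ *ᵥ e)) := by
    rw [show A *ᵥ x + e - A *ᵥ z = A *ᵥ (x - z) + e by rw [mulVec_sub]; abel, mulVec_add,
      restrict_add]
    abel
  calc _ ≤ norm2 (x - z) + lam⁻¹ * (norm2 (restrict T (Aᵀ *ᵥ (A *ᵥ (x - z)))) +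
          norm2 (restrict T (Aᵀ *ᵥ e))) := by
        rw [hsplit]
        refine (norm2_sub_le _ _).trans ?_
        rw [norm2_smul, abs_of_nonneg (inv_nonneg.2 hlam)]
        gcongr
        exact norm2_add_le _ _
    _ ≤ norm2 (x - z) + lam⁻¹ * ((1 + δ) * norm2 (x - z) + √(1 + δ) * norm2 e) := by gcongr
    _ = _ := by ring

lemma norm2_sub_next_iterate_le (hA : IsUnit (A * Aᴴ).det) {s t : ℕ} (hst : 2 * s ≤ t)
    {x μ xk : Fin N → ℝ} (e : Fin M → ℝ) (hx : sparse s x) (hμ : sparse s μ)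
    (hxk : xk = μ + (Aᴴ * (A * Aᴴ)⁻¹) *ᵥ (A *ᵥ x + e - A *ᵥ μ))
    {T : Finset (Fin N)} (hTcard : T.card = s) (hTbig : ∀ i ∈ T, ∀ j ∉ T, |xk j| ≤ |xk i|)
    {lam : ℝ} (hlam : 0 ≤ lam) :
    norm2 (x - (restrict T xk +
        lam⁻¹ • restrict T (Aᴴ *ᵥ (A *ᵥ x + e - A *ᵥ restrict T xk)))) ≤
      (1 + lam⁻¹ * (1 + ripConst A t)) *
          (2 * (pripConst A t * norm2 (x - μ) + √(1 + thetaConst A t) * norm2 e)) +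
        lam⁻¹ * √(1 + ripConst A t) * norm2 e := by
  set S := Finset.univ.filter fun i => x i ≠ 0
  have hxS : ∀ i ∉ S, x i = 0 := by simp [S]
  have hS : S.card ≤ s := hx
  have hΩ : (S ∪ T).card ≤ t := (Finset.card_union_le _ _).trans (by omega)
  have hthreshold := norm2_sub_restrict_le_of_largest xk hxS (hx.trans hTcard.ge) hTbig
  have hnewton := norm2_restrict_sub_preconditioned_step_le A hA e
    ((hx.sub hμ).mono (by omega)) hΩ
  rw [← hxk] at hnewton
  have hw : sparse t (x - restrict T xk) := (hx.sub (sparse_restrict T xk)).mono (by omega)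
  have hδ0 := ripConst_nonneg A t
  refine (norm2_sub_feedback_step_le A hlam e hw (by omega)).trans ?_
  gcongr
  linarith

end IterationSteps

lemma contraction_factor_mem_Ico {δ γ lam : ℝ} (hδ0 : 0 ≤ δ) (hδ : δ < 1) (hγ0 : 0 ≤ γ)
    (hγ : γ < √2 / 4) (hlam : 0 < lam)
    (hlamBig : lam > 2 * √2 * γ * (1 + δ) * √(1 + δ) / (√(1 - δ) * (1 - 2 * √2 * γ))) :
    2 * √2 * γ * (1 + (1 + δ) * √(1 + δ) / (lam * √(1 - δ))) ∈ Set.Ico 0 1 := by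
  have hsqrt2 : √2 * √2 = 2 := Real.mul_self_sqrt zero_le_two
  have hg : 2 * √2 * γ < 1 := by nlinarith [Real.sqrt_nonneg 2]
  have hd : 0 < √(1 - δ) := Real.sqrt_pos.2 (by linarith)
  have h := (div_lt_iff₀ (mul_pos hd (by linarith))).1 hlamBig
  have hc : 2 * √2 * γ * ((1 + δ) * √(1 + δ) / (lam * √(1 - δ))) < 1 - 2 * √2 * γ := by
    rw [← mul_div_assoc, div_lt_iff₀ (mul_pos hlam hd)]
    linarith
  exact ⟨by positivity, by linarith⟩

lemma step_coefficients_le {δ γ θ lam a b : ℝ} (hδ0 : 0 ≤ δ) (hδ : δ < 1) (hγ0 : 0 ≤ γ)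
    (hθ0 : 0 ≤ θ) (hlam : 0 < lam) (ha : 0 ≤ a) (hb : 0 ≤ b) :
    (1 + lam⁻¹ * (1 + δ)) * (2 * (γ * a + √(1 + θ) * b)) + lam⁻¹ * √(1 + δ) * b ≤
      2 * √2 * γ * (1 + (1 + δ) * √(1 + δ) / (lam * √(1 - δ))) * a +
        ((1 + (1 + δ) * √(1 + δ) / (lam * √(1 - δ))) * (√(2 + 2 * θ) + √(1 + θ)) +
          (1 + δ) / (lam * √(1 - δ))) * b := by
  have hd : 0 < √(1 - δ) := Real.sqrt_pos.2 (by linarith)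
  set r := √(1 + δ) / √(1 - δ) with hr_def
  have hr : 1 ≤ r := (one_le_div hd).2 (Real.sqrt_le_sqrt (by linarith))
  have hc : (1 + δ) * √(1 + δ) / (lam * √(1 - δ)) = lam⁻¹ * (1 + δ) * r := by
    rw [hr_def]
    field_simp
  have hc' : (1 + δ) / (lam * √(1 - δ)) = lam⁻¹ * √(1 + δ) * r := by
    rw [hr_def]
    field_simp
    rw [Real.sq_sqrt (by linarith)]
  have hp : lam⁻¹ * (1 + δ) ≤ lam⁻¹ * (1 + δ) * r := le_mul_of_one_le_right (by positivity) hr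
  have hq : lam⁻¹ * √(1 + δ) ≤ lam⁻¹ * √(1 + δ) * r := le_mul_of_one_le_right (by positivity) hr
  have h2 : 2 ≤ 2 * √2 := le_mul_of_one_le_right zero_le_two (Real.one_le_sqrt.2 one_le_two)
  have hθ : √(1 + θ) ≤ √(2 + 2 * θ) := Real.sqrt_le_sqrt (by linarith)
  rw [hc, hc']
  calc _ = (1 + lam⁻¹ * (1 + δ)) * 2 * γ * a +
        ((1 + lam⁻¹ * (1 + δ)) * (√(1 + θ) + √(1 + θ)) + lam⁻¹ * √(1 + δ)) * b := by ring
    _ ≤ (1 + lam⁻¹ * (1 + δ) * r) * (2 * √2) * γ * a +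
        ((1 + lam⁻¹ * (1 + δ) * r) * (√(2 + 2 * θ) + √(1 + θ)) + lam⁻¹ * √(1 + δ) * r) * b := by
          gcongr
    _ = _ := by ring

lemma le_geom_of_le_mul_add {a : ℕ → ℝ} {ρ b : ℝ} (hρ0 : 0 ≤ ρ) (hρ1 : ρ ≠ 1)
    (h : ∀ k, a (k + 1) ≤ ρ * a k + b) (k : ℕ) :
    a k ≤ ρ ^ k * a 0 + b * (1 - ρ ^ k) / (1 - ρ) := by
  induction k with
  | zero => simp
  | succ k ih =>
    have hρ : (1 : ℝ) - ρ ≠ 0 := sub_ne_zero.2 hρ1.symm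
    calc a (k + 1) ≤ ρ * (ρ ^ k * a 0 + b * (1 - ρ ^ k) / (1 - ρ)) + b := by
          linarith [h k, mul_le_mul_of_nonneg_left ih hρ0]
      _ = ρ ^ (k + 1) * a 0 + b * (1 - ρ ^ (k + 1)) / (1 - ρ) := by
          field_simp
          ring

end

theorem stmt11 {M N : ℕ} (A : Matrix (Fin M) (Fin N) ℝ) (hA : IsUnit (A * Aᴴ).det)
    (s : ℕ) (x : Fin N → ℝ) (hx : sparse s x) (e : Fin M → ℝ) (y : Fin M → ℝ)
    (hy : y = A.mulVec x + e)
    (lam : ℝ) (hlam : 0 < lam)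
    (μ xk : ℕ → Fin N → ℝ) (T : ℕ → Finset (Fin N))
    (hμ0 : μ 0 = 0)
    (hxk : ∀ k, 1 ≤ k →
      xk k = μ (k - 1) + (Aᴴ * (A * Aᴴ)⁻¹).mulVec (y - A.mulVec (μ (k - 1))))
    (hTcard : ∀ k, 1 ≤ k → (T k).card = s)
    (hTbig : ∀ k, 1 ≤ k → ∀ i ∈ T k, ∀ j ∉ T k, |xk k j| ≤ |xk k i|)
    (hμ : ∀ k, 1 ≤ k → μ k = restrict (T k) (xk k) +
      lam⁻¹ • restrict (T k) (Aᴴ.mulVec (y - A.mulVec (restrict (T k) (xk k)))))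
    (hδ : ripConst A (3 * s) < 1)
    (hγ : pripConst A (3 * s) < Real.sqrt 2 / 4)
    (hlamBig : lam > 2 * Real.sqrt 2 * pripConst A (3 * s) *
      (1 + ripConst A (3 * s)) * Real.sqrt (1 + ripConst A (3 * s)) /
      (Real.sqrt (1 - ripConst A (3 * s)) *
        (1 - 2 * Real.sqrt 2 * pripConst A (3 * s))))
    (ρ κ : ℝ)
    (hρ : ρ = 2 * Real.sqrt 2 * pripConst A (3 * s) *
      (1 + (1 + ripConst A (3 * s)) * Real.sqrt (1 + ripConst A (3 * s)) /
        (lam * Real.sqrt (1 - ripConst A (3 * s)))))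
    (hκ : κ = (1 + (1 + ripConst A (3 * s)) * Real.sqrt (1 + ripConst A (3 * s)) /
        (lam * Real.sqrt (1 - ripConst A (3 * s)))) *
      (Real.sqrt (2 + 2 * thetaConst A (3 * s)) + Real.sqrt (1 + thetaConst A (3 * s))) +
      (1 + ripConst A (3 * s)) / (lam * Real.sqrt (1 - ripConst A (3 * s)))) :
    ∀ k, 1 ≤ k →
      norm2 (x - μ k) ≤ ρ ^ k * norm2 (x - μ 0) +
        κ * (1 - ρ ^ k) / (1 - ρ) * norm2 e := by
  have hδ0 := ripConst_nonneg A (3 * s)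
  obtain ⟨hρ0, hρ1⟩ : ρ ∈ Set.Ico 0 1 :=
    hρ ▸ contraction_factor_mem_Ico hδ0 hδ (pripConst_nonneg A _) hγ hlam hlamBig
  have hμsparse : ∀ k, sparse s (μ k)
    | 0 => by simp [hμ0, sparse]
    | k + 1 => by
      rw [hμ _ k.succ_pos, ← hTcard _ k.succ_pos]
      exact sparse_of_support_subset fun i hi => by simp [restrict, hi]
  have hstep : ∀ k, norm2 (x - μ (k + 1)) ≤ ρ * norm2 (x - μ k) + κ * norm2 e := by
    intro k
    have hk : 1 ≤ k + 1 := k.succ_pos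
    have hxk' := hxk _ hk
    rw [hy, Nat.add_sub_cancel] at hxk'
    rw [hμ _ hk, hy, hρ, hκ]
    exact (norm2_sub_next_iterate_le A hA (t := 3 * s) (by omega) e hx (hμsparse k) hxk'
      (hTcard _ hk) (hTbig _ hk) hlam.le).trans
      (step_coefficients_le hδ0 hδ (pripConst_nonneg A _) (ripConst_nonneg _ _) hlam
        (norm2_nonneg _) (norm2_nonneg _))
  intro k _
  exact (le_geom_of_le_mul_add (a := fun k => norm2 (x - μ k)) hρ0 hρ1.ne hstep k).trans_eq
    (by ring)
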